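/- Let b(t) = 𝟙_{[0,NT]}(t)/√(NT) (unit-energy rectangular window) and let a: ℝ → ℂ be even, supported in [−T_a/2, T_a/2] with 0 < T_a < T and ∫|a|² = 1/N. Then the time dispersion of the DDOP u(t) = ∑_{n=0}^{N−1} a(t−nT−T_a/2) and the time dispersion of b satisfy ΔT(u)² − ΔT(b)² = N∫t²|a(t)|²dt − T²/12 + T²(N²−1)/12 − N²T²/12 = N∫t²|a(t)|²dt − T²/12, hence |ΔT(u)² − ΔT(b)²| ≤ max(T_a²/4, T²/12) ≤ T²/12 + T_a²/4. -/
import Mathlib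


open MeasureTheory Finset

private lemma sum_range_cast (N : ℕ) :
    ∑ n ∈ Finset.range N, (n : ℝ) = N * (N - 1) / 2 := by
  induction N with
  | zero => simp
  | succ k ih => rw [Finset.sum_range_succ, ih]; push_cast; ring

private lemma sum_range_cast_sq (N : ℕ) :
    ∑ n ∈ Finset.range N, (n : ℝ) ^ 2 = N * (N - 1) * (2 * N - 1) / 6 := by
  induction N with
  | zero => simp
  | succ k ih => rw [Finset.sum_range_succ, ih]; push_cast; ring

theorem ddop_vs_window_time_dispersion
    (N : ℕ) (hN : 1 ≤ N) (T Ta : ℝ) (hTa : 0 < Ta) (hTaT : Ta < T)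
    (a : ℝ → ℂ)
    (ha_even : ∀ t : ℝ, a (-t) = a t)
    (ha_int : Integrable (fun t : ℝ => ‖a t‖ ^ 2))
    (ha2_int : Integrable (fun t : ℝ => t ^ 2 * ‖a t‖ ^ 2))
    (ha_supp : ∀ t : ℝ, Ta / 2 < |t| → a t = 0)
    (ha_energy : (∫ t : ℝ, ‖a t‖ ^ 2) = 1 / (N : ℝ))
    (ha_moment : (∫ t : ℝ, t ^ 2 * ‖a t‖ ^ 2) ≤ Ta ^ 2 / (4 * (N : ℝ)))
    (u : ℝ → ℂ)
    (hu : u = fun t => ∑ n ∈ Finset.range N, a (t - (n : ℝ) * T - Ta / 2))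
    (b : ℝ → ℝ)
    (hb : b = Set.indicator (Set.Icc 0 ((N : ℝ) * T))
      (fun _ => 1 / Real.sqrt ((N : ℝ) * T)))
    (Du2 Db2 : ℝ)
    (hDu2 : Du2 = ∫ t : ℝ, (t - (T * ((N : ℝ) - 1) + Ta) / 2) ^ 2 * ‖u t‖ ^ 2)
    (hDb2 : Db2 = ∫ t : ℝ, (t - (N : ℝ) * T / 2) ^ 2 * ‖b t‖ ^ 2) :
    Du2 - Db2 = (N : ℝ) * (∫ t : ℝ, t ^ 2 * ‖a t‖ ^ 2) - T ^ 2 / 12 ∧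
    |Du2 - Db2| ≤ T ^ 2 / 12 + Ta ^ 2 / 4 := by
  have hT0 : 0 < T := hTa.trans hTaT
  have hN0 : 0 < (N : ℝ) := by exact_mod_cast hN
  set L : ℝ := (N : ℝ) * T with hLdef
  have hL0 : 0 < L := mul_pos hN0 hT0
  set c : ℝ := (T * ((N : ℝ) - 1) + Ta) / 2 with hcdef
  set M : ℝ := ∫ t : ℝ, t ^ 2 * ‖a t‖ ^ 2 with hMdef
  clear_value L c M
  -- Step 1: Db2 = L^2 / 12
  have hDb : Db2 = L ^ 2 / 12 := by
    have hbpt : ∀ t : ℝ, (t - L / 2) ^ 2 * ‖b t‖ ^ 2 =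
        Set.indicator (Set.Icc 0 L) (fun t => (t - L / 2) ^ 2 * (1 / L)) t := by
      intro t
      by_cases h : t ∈ Set.Icc 0 L
      · rw [Set.indicator_of_mem h, hb, Set.indicator_of_mem h]
        rw [Real.norm_eq_abs, sq_abs, div_pow, one_pow, Real.sq_sqrt hL0.le]
      · rw [Set.indicator_of_notMem h, hb, Set.indicator_of_notMem h]
        simp
    rw [hDb2]
    simp_rw [hbpt]
    rw [integral_indicator measurableSet_Icc, MeasureTheory.integral_Icc_eq_integral_Ioc,
      ← intervalIntegral.integral_of_le hL0.le, intervalIntegral.integral_mul_const,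
      intervalIntegral.integral_comp_sub_right (fun u => u ^ 2) (L / 2),
      integral_pow]
    have hLne : L ≠ 0 := hL0.ne'
    field_simp
    ring
  -- integrability of t * ‖a t‖^2
  have hlin : Integrable (fun x : ℝ => x * ‖a x‖ ^ 2) := by
    refine (ha_int.const_mul (Ta / 2)).mono'
      (aestronglyMeasurable_id.mul ha_int.aestronglyMeasurable) ?_
    filter_upwards with x
    by_cases hax : a x = 0
    · simp [hax]
    · have hx : |x| ≤ Ta / 2 := by
        by_contra h
        exact hax (ha_supp x (lt_of_not_ge h))
      have hthis : ‖x * ‖a x‖ ^ 2‖ = |x| * ‖a x‖ ^ 2 := by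
        rw [Real.norm_eq_abs, abs_mul, abs_of_nonneg (by positivity : (0:ℝ) ≤ ‖a x‖ ^ 2)]
      rw [hthis]
      have h2 : (0:ℝ) ≤ ‖a x‖ ^ 2 := by positivity
      nlinarith
  -- odd integral vanishes
  have hodd : (∫ x : ℝ, x * ‖a x‖ ^ 2) = 0 := by
    have h1 : (∫ x : ℝ, (-x) * ‖a (-x)‖ ^ 2) = ∫ x : ℝ, x * ‖a x‖ ^ 2 :=
      integral_neg_eq_self (fun x => x * ‖a x‖ ^ 2) _
    have h2 : (∫ x : ℝ, (-x) * ‖a (-x)‖ ^ 2) = - ∫ x : ℝ, x * ‖a x‖ ^ 2 := by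
      rw [← integral_neg]
      congr 1; funext x; rw [ha_even x]; ring
    linarith [h1, h2]
  -- the key translated integral
  have key : ∀ s : ℝ, (∫ t : ℝ, (t - c) ^ 2 * ‖a (t - s)‖ ^ 2)
      = M + (s - c) ^ 2 * (1 / (N : ℝ)) := by
    intro s
    have h1 : (∫ t : ℝ, (t - c) ^ 2 * ‖a (t - s)‖ ^ 2)
        = ∫ x : ℝ, (x + (s - c)) ^ 2 * ‖a x‖ ^ 2 := by
      rw [← integral_sub_right_eq_self (fun x => (x + (s - c)) ^ 2 * ‖a x‖ ^ 2) s]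
      congr 1; funext t
      show (t - c) ^ 2 * ‖a (t - s)‖ ^ 2 = (t - s + (s - c)) ^ 2 * ‖a (t - s)‖ ^ 2
      have h : t - s + (s - c) = t - c := by ring
      rw [h]
    rw [h1]
    have hi2 : Integrable (fun x : ℝ => (s - c) ^ 2 * ‖a x‖ ^ 2) := ha_int.const_mul _
    have hi1b : Integrable (fun x : ℝ => (2 * (s - c)) * (x * ‖a x‖ ^ 2)) :=
      hlin.const_mul _
    have hi1 : Integrable
        (fun x : ℝ => x ^ 2 * ‖a x‖ ^ 2 + (2 * (s - c)) * (x * ‖a x‖ ^ 2)) :=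
      ha2_int.add hi1b
    have hexp : (fun x : ℝ => (x + (s - c)) ^ 2 * ‖a x‖ ^ 2)
        = fun x : ℝ => (x ^ 2 * ‖a x‖ ^ 2 + (2 * (s - c)) * (x * ‖a x‖ ^ 2))
            + (s - c) ^ 2 * ‖a x‖ ^ 2 := by
      funext x; ring
    rw [hexp, integral_add hi1 hi2, integral_add ha2_int hi1b, integral_const_mul,
      integral_const_mul, hodd, ha_energy, ← hMdef]
    ring
  -- pointwise norm-square of the sum
  have hpt : ∀ t : ℝ, ‖u t‖ ^ 2
      = ∑ n ∈ Finset.range N, ‖a (t - (n : ℝ) * T - Ta / 2)‖ ^ 2 := by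
    intro t
    rw [hu]
    show ‖∑ n ∈ Finset.range N, a (t - (n : ℝ) * T - Ta / 2)‖ ^ 2
      = ∑ n ∈ Finset.range N, ‖a (t - (n : ℝ) * T - Ta / 2)‖ ^ 2
    by_cases hall : ∀ n ∈ Finset.range N, a (t - (n : ℝ) * T - Ta / 2) = 0
    · rw [Finset.sum_eq_zero hall, Finset.sum_eq_zero (fun n hn => by rw [hall n hn]; simp)]
      simp
    · push_neg at hall
      obtain ⟨n₀, hn₀mem, hn₀⟩ := hall
      have hz : ∀ m ∈ Finset.range N, m ≠ n₀ → a (t - (m : ℝ) * T - Ta / 2) = 0 := by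
        intro m _ hne
        by_contra hfm
        have h0 : |t - (n₀ : ℝ) * T - Ta / 2| ≤ Ta / 2 := by
          by_contra h
          exact hn₀ (ha_supp _ (lt_of_not_ge h))
        have h1 : |t - (m : ℝ) * T - Ta / 2| ≤ Ta / 2 := by
          by_contra h
          exact hfm (ha_supp _ (lt_of_not_ge h))
        have hd : |(n₀ : ℝ) * T - (m : ℝ) * T| ≤ Ta := by
          have heq : (n₀ : ℝ) * T - (m : ℝ) * T
              = (t - (m : ℝ) * T - Ta / 2) - (t - (n₀ : ℝ) * T - Ta / 2) := by ring
          rw [heq]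
          calc |(t - (m : ℝ) * T - Ta / 2) - (t - (n₀ : ℝ) * T - Ta / 2)|
              ≤ |t - (m : ℝ) * T - Ta / 2| + |t - (n₀ : ℝ) * T - Ta / 2| := abs_sub _ _
            _ ≤ Ta / 2 + Ta / 2 := add_le_add h1 h0
            _ = Ta := by ring
        have hone : (1 : ℝ) ≤ |(n₀ : ℝ) - (m : ℝ)| := by
          have hzz : ((n₀ : ℤ) - (m : ℤ)) ≠ 0 := by
            intro hcon
            exact hne (by omega : m = n₀)
          have hib := Int.one_le_abs hzz
          have hcast : ((n₀ : ℝ) - (m : ℝ)) = (((n₀ : ℤ) - (m : ℤ) : ℤ) : ℝ) := by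
            push_cast; ring
          rw [hcast, ← Int.cast_abs]
          exact_mod_cast hib
        have hge : T ≤ |(n₀ : ℝ) * T - (m : ℝ) * T| := by
          have heq2 : (n₀ : ℝ) * T - (m : ℝ) * T = ((n₀ : ℝ) - (m : ℝ)) * T := by ring
          rw [heq2, abs_mul, abs_of_pos hT0]
          nlinarith
        linarith
      rw [Finset.sum_eq_single_of_mem n₀ hn₀mem hz,
        Finset.sum_eq_single_of_mem n₀ hn₀mem (fun m hm hne => by rw [hz m hm hne]; simp)]
  -- integrability of each shifted summand
  have hshift : ∀ s : ℝ, Integrable (fun t : ℝ => (t - c) ^ 2 * ‖a (t - s)‖ ^ 2) := by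
    intro s
    have hi2 : Integrable (fun x : ℝ => (s - c) ^ 2 * ‖a x‖ ^ 2) := ha_int.const_mul _
    have hi1b : Integrable (fun x : ℝ => (2 * (s - c)) * (x * ‖a x‖ ^ 2)) :=
      hlin.const_mul _
    have hg : Integrable (fun x : ℝ => (x + (s - c)) ^ 2 * ‖a x‖ ^ 2) := by
      have hexp : (fun x : ℝ => (x + (s - c)) ^ 2 * ‖a x‖ ^ 2)
          = fun x : ℝ => (x ^ 2 * ‖a x‖ ^ 2 + (2 * (s - c)) * (x * ‖a x‖ ^ 2))
              + (s - c) ^ 2 * ‖a x‖ ^ 2 := by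
        funext x; ring
      rw [hexp]
      exact (ha2_int.add hi1b).add hi2
    refine (hg.comp_sub_right s).congr ?_
    filter_upwards with t
    show (t - s + (s - c)) ^ 2 * ‖a (t - s)‖ ^ 2 = (t - c) ^ 2 * ‖a (t - s)‖ ^ 2
    have h : t - s + (s - c) = t - c := by ring
    rw [h]
  -- Du2 as a finite sum of integrals
  have hDu : Du2 = (N : ℝ) * M + T ^ 2 * ((N : ℝ) ^ 2 - 1) / 12 := by
    have h0 : Du2 = ∫ t : ℝ, ∑ n ∈ Finset.range N,
        (t - c) ^ 2 * ‖a (t - ((n : ℝ) * T + Ta / 2))‖ ^ 2 := by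
      rw [hDu2]
      congr 1; funext t
      rw [hpt t, Finset.mul_sum]
      refine Finset.sum_congr rfl (fun n _ => ?_)
      have h : t - (n : ℝ) * T - Ta / 2 = t - ((n : ℝ) * T + Ta / 2) := by ring
      rw [h]
    have hsum := integral_finset_sum (μ := volume) (Finset.range N)
      (f := fun (n : ℕ) (t : ℝ) => (t - c) ^ 2 * ‖a (t - ((n : ℝ) * T + Ta / 2))‖ ^ 2)
      (fun n _ => hshift ((n : ℝ) * T + Ta / 2))
    rw [h0, hsum]
    have h2 : ∀ n ∈ Finset.range N,
        (∫ t : ℝ, (t - c) ^ 2 * ‖a (t - ((n : ℝ) * T + Ta / 2))‖ ^ 2)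
          = M + ((n : ℝ) * T + Ta / 2 - c) ^ 2 * (1 / (N : ℝ)) :=
      fun n _ => key _
    rw [Finset.sum_congr rfl h2, Finset.sum_add_distrib, Finset.sum_const,
      Finset.card_range, nsmul_eq_mul]
    have h3 : ∑ n ∈ Finset.range N, ((n : ℝ) * T + Ta / 2 - c) ^ 2 * (1 / (N : ℝ))
        = (T ^ 2 / (N : ℝ)) * ∑ n ∈ Finset.range N, ((n : ℝ) ^ 2 - ((N:ℝ) - 1) * n
            + (((N:ℝ) - 1) / 2) ^ 2) := by
      rw [Finset.mul_sum]
      refine Finset.sum_congr rfl (fun n _ => ?_)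
      rw [hcdef]
      field_simp
      ring
    rw [h3, Finset.sum_add_distrib, Finset.sum_sub_distrib, sum_range_cast_sq,
      ← Finset.mul_sum, sum_range_cast, Finset.sum_const, Finset.card_range, nsmul_eq_mul]
    field_simp
    ring
  have hMnn : 0 ≤ M := by
    rw [hMdef]
    exact integral_nonneg (fun t => by positivity)
  have hMup : (N : ℝ) * M ≤ Ta ^ 2 / 4 := by
    have h4 : (0:ℝ) < 4 * (N : ℝ) := by positivity
    have h := ha_moment
    rw [le_div_iff₀ h4] at h
    nlinarith
  constructor
  · rw [hDu, hDb, hLdef]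
    ring
  · have hx : Du2 - Db2 = (N : ℝ) * M - T ^ 2 / 12 := by
      rw [hDu, hDb, hLdef]; ring
    rw [hx, abs_le]
    constructor
    · have h1 : 0 ≤ (N : ℝ) * M := mul_nonneg hN0.le hMnn
      have h2 : (0:ℝ) ≤ Ta ^ 2 := sq_nonneg Ta
      linarith
    · have h3 : (0:ℝ) ≤ T ^ 2 := sq_nonneg T
      linarith
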